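/- arXiv:1407.4056 — 9 statements merged into one kernel-verified Lean document; each statement's English description precedes it below -/
import Mathlib

section
/- Let r > 0, let δ ∈ (0, π/3], and let v, e ∈ ℝ² with ℓ(v, e) ≥ 2r. Let u ∈ ℝ² satisfy ℓ(v, u) = 2r·cos(δ/2) and ∠(u, v, e) ≤ δ/2. Suppose a is a point of the anchor region closedBall(v, r) ∩ closedBall(u, r). Then every point x ∈ closedBall(v, r) with x ≠ v and ℓ(x, e) ≤ ℓ(a, e) satisfies ∠(x, v, e) ≤ δ. -/
open Real EuclideanGeometry Metric
open scoped RealInnerProductSpace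

/-!
Put `L = ℓ(v, e)`. Since `u` is seen from `v` within `δ/2` of `e` at distance `2r cos(δ/2)`, and
`a` lies within `r` of `u`, projecting onto `e - v` gives `⟪a - v, e - v⟫ ≥ rL(2cos²(δ/2) - 1) =
rL cos δ`, hence `ℓ(a, e)² ≤ r² + L² - 2rL cos δ`. On the other hand, if `0 < d = ℓ(x, v) ≤ r` and
`∠(x, v, e) > δ`, the law of cosines gives `ℓ(x, e)² > d² + L² - 2dL cos δ`, and `t ↦ t² - 2tL cos δ`
is decreasing on `[0, r]` because `r ≤ L/2 ≤ L cos δ` when `δ ≤ π/3`.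
-/

namespace EuclideanGeometry

variable {V P : Type*} [NormedAddCommGroup V] [InnerProductSpace ℝ V] [MetricSpace P]
  [NormedAddTorsor V P]

theorem inner_vsub_vsub_eq_dist_mul_dist_mul_cos_angle (p₁ p₂ p₃ : P) :
    ⟪p₁ -ᵥ p₂, p₃ -ᵥ p₂⟫ = dist p₁ p₂ * dist p₃ p₂ * cos (∠ p₁ p₂ p₃) := by
  rw [dist_eq_norm_vsub V p₁ p₂, dist_eq_norm_vsub V p₃ p₂, angle,
    ← InnerProductGeometry.cos_angle_mul_norm_mul_norm]
  ring

theorem dist_sq_eq_dist_sq_add_dist_sq_sub_two_mul_inner (p₁ p₂ p₃ : P) :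
    dist p₁ p₃ ^ 2 = dist p₁ p₂ ^ 2 + dist p₃ p₂ ^ 2 - 2 * ⟪p₁ -ᵥ p₂, p₃ -ᵥ p₂⟫ := by
  rw [inner_vsub_vsub_eq_dist_mul_dist_mul_cos_angle, sq, law_cos]
  ring

theorem dist_mul_dist_mul_cos_le_inner_of_angle_le {u v e : P} {θ : ℝ} (h : ∠ u v e ≤ θ)
    (hθ : θ ≤ π) : dist u v * dist e v * cos θ ≤ ⟪u -ᵥ v, e -ᵥ v⟫ := by
  rw [inner_vsub_vsub_eq_dist_mul_dist_mul_cos_angle]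
  exact mul_le_mul_of_nonneg_left (cos_le_cos_of_nonneg_of_le_pi (angle_nonneg u v e) hθ h)
    (by positivity)

theorem mul_dist_mul_cos_le_inner_of_mem_anchor {r δ : ℝ} {v e u a : P} (hδ : δ ≤ 2 * π)
    (hu : dist v u = 2 * r * cos (δ / 2)) (hangle : ∠ u v e ≤ δ / 2) (hau : dist a u ≤ r) :
    r * dist e v * cos δ ≤ ⟪a -ᵥ v, e -ᵥ v⟫ := by
  have hsplit : ⟪a -ᵥ v, e -ᵥ v⟫ = ⟪u -ᵥ v, e -ᵥ v⟫ + ⟪a -ᵥ u, e -ᵥ v⟫ := by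
    rw [← inner_add_left, add_comm, vsub_add_vsub_cancel]
  have hcenter := dist_mul_dist_mul_cos_le_inner_of_angle_le hangle (by linarith)
  have hcauchy : -(dist a u * dist e v) ≤ ⟪a -ᵥ u, e -ᵥ v⟫ := by
    rw [dist_eq_norm_vsub V a u, dist_eq_norm_vsub V e v]
    exact neg_le_of_abs_le (abs_real_inner_le_norm _ _)
  have hradius : dist a u * dist e v ≤ r * dist e v :=
    mul_le_mul_of_nonneg_right hau dist_nonneg
  have hcos : cos δ = 2 * cos (δ / 2) ^ 2 - 1 := by
    rw [← cos_two_mul, mul_div_cancel₀ δ two_ne_zero]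
  rw [dist_comm u v, hu] at hcenter
  rw [hsplit, hcos]
  nlinarith

theorem dist_sq_le_of_mem_anchor {r δ : ℝ} {v e u a : P} (hδ : δ ≤ 2 * π)
    (hu : dist v u = 2 * r * cos (δ / 2)) (hangle : ∠ u v e ≤ δ / 2) (hav : dist a v ≤ r)
    (hau : dist a u ≤ r) :
    dist a e ^ 2 ≤ r ^ 2 + dist e v ^ 2 - 2 * r * dist e v * cos δ := by
  have hinner := mul_dist_mul_cos_le_inner_of_mem_anchor hδ hu hangle hau
  have hav2 : dist a v ^ 2 ≤ r ^ 2 := pow_le_pow_left₀ dist_nonneg hav 2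
  rw [dist_sq_eq_dist_sq_add_dist_sq_sub_two_mul_inner a v e]
  linarith

theorem dist_sq_lt_of_lt_angle {r δ : ℝ} {x v e : P} (hδ : 0 ≤ δ) (hδx : δ < ∠ x v e)
    (hxv : x ≠ v) (hxr : dist x v ≤ r) (hrL : r + dist x v ≤ 2 * dist e v * cos δ) :
    r ^ 2 + dist e v ^ 2 - 2 * r * dist e v * cos δ < dist x e ^ 2 := by
  have hd : 0 < dist x v := dist_pos.mpr hxv
  have hL : 0 < dist e v := by
    refine dist_nonneg.lt_of_ne fun hL ↦ ?_
    rw [← hL] at hrL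
    linarith
  have hcos : cos (∠ x v e) < cos δ := cos_lt_cos_of_nonneg_of_le_pi hδ (angle_le_pi x v e) hδx
  have hcos' : dist x v * dist e v * cos (∠ x v e) < dist x v * dist e v * cos δ :=
    mul_lt_mul_of_pos_left hcos (mul_pos hd hL)
  have hdecr : 0 ≤ (r - dist x v) * (2 * dist e v * cos δ - dist x v - r) :=
    mul_nonneg (by linarith) (by linarith)
  rw [sq (dist x e), law_cos x v e]
  nlinarith

end EuclideanGeometry

theorem stmt_1_general (r δ : ℝ) (hδ : δ ∈ Set.Ioc 0 (π / 3))
    (v e u a : EuclideanSpace ℝ (Fin 2))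
    (hve : 2 * r ≤ dist v e)
    (hu : dist v u = 2 * r * Real.cos (δ / 2))
    (hangle : EuclideanGeometry.angle u v e ≤ δ / 2)
    (ha : a ∈ Metric.closedBall v r ∩ Metric.closedBall u r)
    (x : EuclideanSpace ℝ (Fin 2)) (hx : x ∈ Metric.closedBall v r)
    (hxv : x ≠ v) (hclose : dist x e ≤ dist a e) :
    EuclideanGeometry.angle x v e ≤ δ := by
  obtain ⟨hδ0, hδπ⟩ := hδ
  obtain ⟨hav, hau⟩ := ha
  rw [mem_closedBall] at hx hav hau
  rw [dist_comm] at hve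
  have hcos : 1 / 2 ≤ cos δ :=
    cos_pi_div_three ▸ cos_le_cos_of_nonneg_of_le_pi hδ0.le (by linarith [pi_pos]) hδπ
  have hae := dist_sq_le_of_mem_anchor (by linarith [pi_pos]) hu hangle hav hau
  by_contra! hlt
  have hxe := dist_sq_lt_of_lt_angle hδ0.le hlt hxv hx
    (by nlinarith [mul_le_mul_of_nonneg_left hcos (dist_nonneg : 0 ≤ dist e v)])
  nlinarith [pow_le_pow_left₀ dist_nonneg hclose 2]

theorem stmt_1 (r δ : ℝ) (hr : 0 < r) (hδ : δ ∈ Set.Ioc 0 (π / 3))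
    (v e u a : EuclideanSpace ℝ (Fin 2))
    (hve : 2 * r ≤ dist v e)
    (hu : dist v u = 2 * r * Real.cos (δ / 2))
    (hangle : EuclideanGeometry.angle u v e ≤ δ / 2)
    (ha : a ∈ Metric.closedBall v r ∩ Metric.closedBall u r)
    (x : EuclideanSpace ℝ (Fin 2)) (hx : x ∈ Metric.closedBall v r)
    (hxv : x ≠ v) (hclose : dist x e ≤ dist a e) :
    EuclideanGeometry.angle x v e ≤ δ :=
  stmt_1_general r δ hδ v e u a hve hu hangle ha x hx hxv hclose
end

section
/- Let r > 0, let δ ∈ (0, π/3], and let v, e ∈ ℝ² with ℓ(v, e) ≥ 2r. Let u ∈ ℝ² satisfy ℓ(v, u) = 2r·cos(δ/2), set φ = ∠(u, v, e), and assume φ ≤ δ/2. Set Φ = arccos(2·cos(δ/2)·cos(φ) − 1). Then for every point a in the anchor region closedBall(v, r) ∩ closedBall(u, r) and every point x ∈ closedBall(v, r) with x ≠ v and ∠(x, v, e) > Φ, one has ℓ(a, e) ≤ ℓ(x, e). -/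
open Real EuclideanGeometry Metric

/-!
Write `c = 2 cos (δ/2) cos φ - 1 = cos Φ` and `D = ℓ(v,e)`. Projecting onto the direction `e - v`,
every point `a` of the lens satisfies `⟪a - v, e - v⟫ ≥ (ℓ(v,u) cos φ - r) D = r c D`, hence
`ℓ(a,e)² ≤ r² + D² - 2 r c D`. For `x` at distance `t ≤ r` from `v` beyond the angle `Φ`, the law of
cosines gives `ℓ(x,e)² ≥ t² + D² - 2 t c D`, and this bound decreases in `t` on `[0, r]` because
`c ≥ cos δ ≥ 1/2` and `D ≥ 2r`.
-/

section

variable {V P : Type*} [NormedAddCommGroup V] [InnerProductSpace ℝ V] [MetricSpace P]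
  [NormedAddTorsor V P]

theorem dist_mul_cos_angle_sub_dist_mul_dist_le_inner (a u v e : P) :
    (dist v u * cos (∠ u v e) - dist a u) * dist v e ≤ inner ℝ (a -ᵥ v) (e -ᵥ v) := by
  have hsplit :
      inner ℝ (a -ᵥ v) (e -ᵥ v) = inner ℝ (a -ᵥ u) (e -ᵥ v) + inner ℝ (u -ᵥ v) (e -ᵥ v) := by
    rw [← inner_add_left, vsub_add_vsub_cancel]
  have hproj : inner ℝ (u -ᵥ v) (e -ᵥ v) = dist v u * cos (∠ u v e) * dist v e := by
    rw [← InnerProductGeometry.cos_angle_mul_norm_mul_norm, ← angle, dist_comm v u, dist_comm v e,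
      dist_eq_norm_vsub V, dist_eq_norm_vsub V]
    ring
  have hcs : -(dist a u * dist v e) ≤ inner ℝ (a -ᵥ u) (e -ᵥ v) := by
    rw [dist_eq_norm_vsub V, dist_comm, dist_eq_norm_vsub V]
    exact neg_le_of_abs_le (abs_real_inner_le_norm _ _)
  linarith

theorem dist_sq_le_of_mem_closedBall_inter_closedBall {a u v : P} {r : ℝ}
    (ha : a ∈ closedBall v r ∩ closedBall u r) (e : P) :
    dist a e ^ 2 ≤ r ^ 2 + dist v e ^ 2 - 2 * dist v e * (dist v u * cos (∠ u v e) - r) := by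
  obtain ⟨hav, hau⟩ := ha
  rw [mem_closedBall] at hav hau
  have hinner := dist_mul_cos_angle_sub_dist_mul_dist_le_inner a u v e
  have hexpand : dist a e ^ 2 = dist a v ^ 2 - 2 * inner ℝ (a -ᵥ v) (e -ᵥ v) + dist v e ^ 2 := by
    rw [dist_eq_norm_vsub V a, ← vsub_sub_vsub_cancel_right a e v, norm_sub_sq_real,
      dist_eq_norm_vsub V, dist_comm, dist_eq_norm_vsub V]
  have hav2 : dist a v ^ 2 ≤ r ^ 2 := pow_le_pow_left₀ dist_nonneg hav 2
  nlinarith [mul_le_mul_of_nonneg_right hau (dist_nonneg (x := v) (y := e))]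

theorem le_dist_sq_of_cos_angle_le {x v e : P} {r c : ℝ} (hx : dist x v ≤ r)
    (hc : cos (∠ x v e) ≤ c) (hr : r ≤ dist v e * c) :
    r ^ 2 + dist v e ^ 2 - 2 * r * dist v e * c ≤ dist x e ^ 2 := by
  have hlaw := law_cos x v e
  rw [dist_comm e v] at hlaw
  have hcos : dist x v * dist v e * cos (∠ x v e) ≤ dist x v * dist v e * c :=
    mul_le_mul_of_nonneg_left hc (mul_nonneg dist_nonneg dist_nonneg)
  nlinarith [mul_nonneg (sub_nonneg.2 hx) (by linarith [dist_nonneg (x := x) (y := v)] :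
    0 ≤ 2 * dist v e * c - r - dist x v)]

end

theorem one_half_le_two_mul_cos_half_mul_cos_sub_one {δ φ : ℝ} (hφ₀ : 0 ≤ φ) (hφ : φ ≤ δ / 2)
    (hδ : δ ≤ π / 3) : 1 / 2 ≤ 2 * cos (δ / 2) * cos φ - 1 := by
  have hcos_half : 0 ≤ cos (δ / 2) :=
    cos_nonneg_of_neg_pi_div_two_le_of_le (by linarith) (by linarith)
  have hcos_φ : cos (δ / 2) ≤ cos φ := cos_le_cos_of_nonneg_of_le_pi hφ₀ (by linarith) hφ
  have hcos_δ : 1 / 2 ≤ cos δ := by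
    rw [← cos_pi_div_three]
    exact cos_le_cos_of_nonneg_of_le_pi (by linarith) (by linarith) hδ
  have hdouble : cos δ = 2 * cos (δ / 2) ^ 2 - 1 := by
    rw [← cos_two_mul, mul_div_cancel₀ _ two_ne_zero]
  nlinarith [mul_le_mul_of_nonneg_left hcos_φ hcos_half]

theorem stmt_2_general (r δ : ℝ) (hδ : δ ∈ Set.Ioc 0 (π / 3))
    (v e u : EuclideanSpace ℝ (Fin 2))
    (hve : 2 * r ≤ dist v e)
    (hu : dist v u = 2 * r * Real.cos (δ / 2))
    (hφ : EuclideanGeometry.angle u v e ≤ δ / 2) :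
    ∀ a ∈ Metric.closedBall v r ∩ Metric.closedBall u r,
      ∀ x ∈ Metric.closedBall v r, x ≠ v →
        Real.arccos (2 * Real.cos (δ / 2) * Real.cos (EuclideanGeometry.angle u v e) - 1) <
          EuclideanGeometry.angle x v e →
        dist a e ≤ dist x e := by
  intro a ha x hx _ hΦ
  set c := 2 * cos (δ / 2) * cos (∠ u v e) - 1
  have hc_half : 1 / 2 ≤ c :=
    one_half_le_two_mul_cos_half_mul_cos_sub_one (angle_nonneg u v e) hφ hδ.2
  have hc_one : c ≤ 1 := by
    have : cos (δ / 2) * cos (∠ u v e) ≤ 1 := (le_abs_self _).trans <| by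
      rw [abs_mul]
      exact mul_le_one₀ (abs_cos_le_one _) (abs_nonneg _) (abs_cos_le_one _)
    linarith
  have hcos : cos (∠ x v e) ≤ c := by
    rw [← cos_arccos (by linarith) hc_one]
    exact cos_le_cos_of_nonneg_of_le_pi (arccos_nonneg c) (angle_le_pi x v e) hΦ.le
  have ha_sq := dist_sq_le_of_mem_closedBall_inter_closedBall ha e
  have hx_sq := le_dist_sq_of_cos_angle_le (mem_closedBall.1 hx) hcos
    (by nlinarith [dist_nonneg (x := v) (y := e)])
  rw [hu] at ha_sq
  exact (sq_le_sq₀ dist_nonneg dist_nonneg).1 (by linarith)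

theorem stmt_2 (r δ : ℝ) (hr : 0 < r) (hδ : δ ∈ Set.Ioc 0 (π / 3))
    (v e u : EuclideanSpace ℝ (Fin 2))
    (hve : 2 * r ≤ dist v e)
    (hu : dist v u = 2 * r * Real.cos (δ / 2))
    (hφ : EuclideanGeometry.angle u v e ≤ δ / 2) :
    ∀ a ∈ Metric.closedBall v r ∩ Metric.closedBall u r,
      ∀ x ∈ Metric.closedBall v r, x ≠ v →
        Real.arccos (2 * Real.cos (δ / 2) * Real.cos (EuclideanGeometry.angle u v e) - 1) <
          EuclideanGeometry.angle x v e →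
        dist a e ≤ dist x e :=
  stmt_2_general r δ hδ v e u hve hu hφ
end

section
/- Let δ ∈ (0, π/3] and let φ be a real number with 0 ≤ φ ≤ δ/2. Then cos δ ≤ 2·cos(δ/2)·cos(φ) − 1 ≤ 1, and consequently arccos(2·cos(δ/2)·cos(φ) − 1) ≤ δ. -/
open Real

theorem stmt_3 (δ φ : ℝ) (hδ : δ ∈ Set.Ioc 0 (π / 3))
    (hφ0 : 0 ≤ φ) (hφ : φ ≤ δ / 2) :
    Real.cos δ ≤ 2 * Real.cos (δ / 2) * Real.cos φ - 1 ∧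
      2 * Real.cos (δ / 2) * Real.cos φ - 1 ≤ 1 ∧
      Real.arccos (2 * Real.cos (δ / 2) * Real.cos φ - 1) ≤ δ := by
  obtain ⟨hδ0, hδπ⟩ := hδ
  have hpi := Real.pi_pos
  have hδ2 : δ / 2 ≤ π / 2 := by linarith
  have hc2 : 0 ≤ Real.cos (δ / 2) := Real.cos_nonneg_of_mem_Icc ⟨by linarith, hδ2⟩
  have hcφ : Real.cos (δ / 2) ≤ Real.cos φ :=
    Real.cos_le_cos_of_nonneg_of_le_pi hφ0 (by linarith) hφ
  have hcφ1 : Real.cos φ ≤ 1 := Real.cos_le_one φ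
  have hlow : Real.cos δ ≤ 2 * Real.cos (δ / 2) * Real.cos φ - 1 := by
    have h : Real.cos δ = 2 * Real.cos (δ / 2) ^ 2 - 1 := by
      have h := Real.cos_sq (δ / 2)
      have h2 : 2 * (δ / 2) = δ := by ring
      rw [h2] at h; linarith
    nlinarith
  have hhigh : 2 * Real.cos (δ / 2) * Real.cos φ - 1 ≤ 1 := by
    nlinarith [Real.cos_le_one (δ / 2)]
  refine ⟨hlow, hhigh, ?_⟩
  calc Real.arccos (2 * Real.cos (δ / 2) * Real.cos φ - 1)
      ≤ Real.arccos (Real.cos δ) := by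
        rcases eq_or_lt_of_le hlow with h | h
        · rw [h]
        · exact le_of_lt (Real.strictAntiOn_arccos
            ⟨Real.neg_one_le_cos δ, Real.cos_le_one δ⟩
            ⟨by linarith [Real.neg_one_le_cos δ], hhigh⟩ h)
    _ = δ := Real.arccos_cos (by linarith) (by linarith)
end

section
/- Let p, d ∈ ℝ² with p ≠ d, let 0 < U < 1, and let e ∈ ℝ² with e ≠ p and ℓ(d, e) ≤ U·ℓ(p, d). Then ∠(d, p, e) ≤ arcsin U. -/
open Real EuclideanGeometry

theorem stmt_7 (p d e : EuclideanSpace ℝ (Fin 2)) (hpd : p ≠ d)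
    (U : ℝ) (hU0 : 0 < U) (hU1 : U < 1) (hep : e ≠ p)
    (h : dist d e ≤ U * dist p d) :
    EuclideanGeometry.angle d p e ≤ Real.arcsin U := by
  have hlc := EuclideanGeometry.law_cos d p e
  have hA : (0:ℝ) < dist d p := dist_pos.2 hpd.symm
  have hB : (0:ℝ) < dist e p := dist_pos.2 hep
  have hApd : dist p d = dist d p := dist_comm p d
  rw [hApd] at h
  set θ := EuclideanGeometry.angle d p e with hθ
  set A := dist d p with hAdef
  set B := dist e p with hBdef
  have hc0 : (0:ℝ) ≤ dist d e := dist_nonneg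
  have hθ0 : 0 ≤ θ := EuclideanGeometry.angle_nonneg d p e
  have hθπ : θ ≤ Real.pi := EuclideanGeometry.angle_le_pi d p e
  have hcsq : dist d e * dist d e ≤ (U * A) * (U * A) :=
    mul_le_mul h h hc0 (by positivity)
  have hUA : U * A < A := by nlinarith
  have h2 : (U * A) * (U * A) < A * A := by nlinarith [mul_pos hU0 hA]
  have hcos : 0 ≤ Real.cos θ := by
    by_contra hneg
    push_neg at hneg
    nlinarith [mul_pos hA hB]
  have hsin0 : 0 ≤ Real.sin θ := Real.sin_nonneg_of_nonneg_of_le_pi hθ0 hθπ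
  have hs2 : Real.sin θ ^ 2 = 1 - Real.cos θ ^ 2 := by
    have := Real.sin_sq_add_cos_sq θ; linarith
  have hkey : (A * Real.sin θ) ^ 2 ≤ (U * A) ^ 2 := by
    nlinarith [sq_nonneg (A * Real.cos θ - B)]
  have hkey2 : A * Real.sin θ ≤ U * A := by
    have h3 := Real.sqrt_le_sqrt hkey
    rwa [Real.sqrt_sq (by positivity), Real.sqrt_sq (by positivity)] at h3
  have hsinle : Real.sin θ ≤ U := by nlinarith
  have hθhalf : θ ≤ Real.pi / 2 := by
    by_contra hgt
    push_neg at hgt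
    have := Real.cos_neg_of_pi_div_two_lt_of_lt hgt (by linarith [Real.pi_pos])
    linarith
  calc θ = Real.arcsin (Real.sin θ) := (Real.arcsin_sin (by linarith [Real.pi_pos]) hθhalf).symm
    _ ≤ Real.arcsin U := Real.monotone_arcsin hsinle
end

section
/- Let p, d ∈ ℝ² with p ≠ d and let 0 < U < 1. Then there exists a point e ∈ ℝ² with ℓ(d, e) = U·ℓ(p, d) and ∠(d, p, e) = arcsin U. -/
open Real EuclideanGeometry Module
open scoped RealInnerProductSpace

/-! The point `e` is the foot of the tangent from `p` to the circle of radius `U * dist p d`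
around `d`: the angle at `e` is right, so `sin ∠ d p e = dist d e / dist p d = U`.
Explicitly, for `w ⊥ d -ᵥ p` with `‖w‖ = ‖d -ᵥ p‖` and `a = √(1 - U²)`, the vector
`d -ᵥ p` splits into the orthogonal legs `a • (a • (d -ᵥ p) + U • w)` and
`U • (U • (d -ᵥ p) - a • w)`. -/

variable {V : Type*} [NormedAddCommGroup V] [InnerProductSpace ℝ V]

theorem exists_ne_zero_inner_eq_zero [FiniteDimensional ℝ V] (h : 2 ≤ finrank ℝ V) (v : V) :
    ∃ u : V, u ≠ 0 ∧ ⟪v, u⟫ = 0 := by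
  have hspan : (ℝ ∙ v) ≠ ⊤ := fun htop => by
    have := finrank_span_le_card (R := ℝ) ({v} : Set V)
    rw [htop, finrank_top] at this
    simp at this
    omega
  obtain ⟨u, hu, hu0⟩ := Submodule.exists_mem_ne_zero_of_ne_bot
    (mt Submodule.orthogonal_eq_bot_iff.mp hspan)
  exact ⟨u, hu0, Submodule.mem_orthogonal_singleton_iff_inner_right.mp hu⟩

theorem exists_inner_eq_zero_norm_eq [FiniteDimensional ℝ V] (h : 2 ≤ finrank ℝ V) (v : V) :
    ∃ w : V, ⟪v, w⟫ = 0 ∧ ‖w‖ = ‖v‖ := by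
  obtain ⟨u, hu0, hvu⟩ := exists_ne_zero_inner_eq_zero h v
  refine ⟨(‖v‖ / ‖u‖) • u, by rw [inner_smul_right, hvu, mul_zero], ?_⟩
  rw [norm_smul, Real.norm_of_nonneg (by positivity), div_mul_cancel₀ _ (norm_ne_zero_iff.mpr hu0)]

theorem inner_smul_add_smul_smul_sub_smul_eq_zero {v w : V} (hvw : ⟪v, w⟫ = 0) (hw : ‖w‖ = ‖v‖)
    (a b : ℝ) : ⟪a • (a • v + b • w), b • (b • v - a • w)⟫ = 0 := by
  have hwv : ⟪w, v⟫ = 0 := by rw [real_inner_comm, hvw]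
  simp only [inner_smul_left, inner_smul_right, inner_add_left, inner_sub_right, hvw, hwv,
    real_inner_self_eq_norm_sq, hw, RCLike.conj_to_real]
  ring

theorem norm_smul_sub_smul_eq {v w : V} (hvw : ⟪v, w⟫ = 0) (hw : ‖w‖ = ‖v‖)
    {a b : ℝ} (hab : a ^ 2 + b ^ 2 = 1) : ‖b • v - a • w‖ = ‖v‖ := by
  have h : ⟪b • v, a • w⟫ = 0 := by rw [inner_smul_left, inner_smul_right, hvw]; simp
  have hsq := norm_sub_sq_eq_norm_sq_add_norm_sq_real h
  rw [norm_smul, norm_smul, hw, Real.norm_eq_abs, Real.norm_eq_abs] at hsq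
  refine (mul_self_inj (norm_nonneg _) (norm_nonneg _)).mp ?_
  rw [hsq]
  linear_combination ‖v‖ * ‖v‖ * (abs_mul_abs_self a + abs_mul_abs_self b + hab)

variable {P : Type*} [MetricSpace P] [NormedAddTorsor V P]

theorem exists_angle_eq_pi_div_two_dist_eq [FiniteDimensional ℝ V] (h : 2 ≤ finrank ℝ V)
    (p d : P) {U : ℝ} (hU0 : 0 ≤ U) (hU1 : U ≤ 1) :
    ∃ e : P, ∠ d e p = π / 2 ∧ dist d e = U * dist p d := by
  obtain ⟨w, hvw, hw⟩ := exists_inner_eq_zero_norm_eq h (d -ᵥ p)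
  set a := √(1 - U ^ 2)
  have hab : a ^ 2 + U ^ 2 = 1 := by rw [sq_sqrt (by nlinarith)]; ring
  have hsum : d -ᵥ p - a • (a • (d -ᵥ p) + U • w) = U • (U • (d -ᵥ p) - a • w) := by
    calc d -ᵥ p - a • (a • (d -ᵥ p) + U • w)
        = (1 - a ^ 2) • (d -ᵥ p) - (a * U) • w := by module
      _ = U • (U • (d -ᵥ p) - a • w) := by rw [show 1 - a ^ 2 = U ^ 2 by linarith]; module
  refine ⟨(a • (a • (d -ᵥ p) + U • w)) +ᵥ p, ?_, ?_⟩
  · rw [EuclideanGeometry.angle, vsub_vadd_eq_vsub_sub, hsum, vsub_vadd_eq_vsub_sub, vsub_self,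
      zero_sub, ← InnerProductGeometry.inner_eq_zero_iff_angle_eq_pi_div_two, inner_neg_right,
      real_inner_comm, inner_smul_add_smul_smul_sub_smul_eq_zero hvw hw, neg_zero]
  · rw [dist_eq_norm_vsub V, vsub_vadd_eq_vsub_sub, hsum, norm_smul, Real.norm_of_nonneg hU0,
      norm_smul_sub_smul_eq hvw hw hab, dist_eq_norm_vsub' V]

theorem stmt_8 (p d : EuclideanSpace ℝ (Fin 2)) (hpd : p ≠ d)
    (U : ℝ) (hU0 : 0 < U) (hU1 : U < 1) :
    ∃ e : EuclideanSpace ℝ (Fin 2),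
      dist d e = U * dist p d ∧
        EuclideanGeometry.angle d p e = Real.arcsin U := by
  obtain ⟨e, hright, hdist⟩ := exists_angle_eq_pi_div_two_dist_eq (by simp) p d hU0.le hU1.le
  have hde : d ≠ e := dist_pos.mp (by rw [hdist]; exact mul_pos hU0 (dist_pos.mpr hpd))
  refine ⟨e, hdist, ?_⟩
  rw [angle_comm, angle_eq_arcsin_of_angle_eq_pi_div_two hright (.inl hde), hdist, dist_comm d p,
    mul_div_cancel_right₀ _ (dist_ne_zero.mpr hpd)]
end

section
/- Let u and δ be real numbers with 0 ≤ u < 1, δ ≥ 0, and √2·δ < √(1 − u²). Then cos(arcsin u + δ) > 0 and 1/cos(arcsin u + δ) ≤ 1/(√(1 − u²) − √2·δ). -/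
open Real

theorem stmt_10 (u δ : ℝ) (hu0 : 0 ≤ u) (hu1 : u < 1) (hδ : 0 ≤ δ)
    (h : Real.sqrt 2 * δ < Real.sqrt (1 - u ^ 2)) :
    0 < Real.cos (Real.arcsin u + δ) ∧
      1 / Real.cos (Real.arcsin u + δ) ≤
        1 / (Real.sqrt (1 - u ^ 2) - Real.sqrt 2 * δ) := by
  have hs2 : Real.sqrt 2 ^ 2 = 2 := Real.sq_sqrt (by norm_num)
  have hs2pos : (0:ℝ) < Real.sqrt 2 := Real.sqrt_pos.mpr (by norm_num)
  have hq0 : 0 ≤ Real.sqrt (1 - u ^ 2) := Real.sqrt_nonneg _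
  have hq1 : Real.sqrt (1 - u ^ 2) ≤ 1 := by
    exact Real.sqrt_le_one.mpr (by nlinarith)
  have hδlt : Real.sqrt 2 * δ < 1 := lt_of_lt_of_le h hq1
  have hδpi : δ ≤ Real.pi := by
    nlinarith [Real.pi_gt_three]
  have hsinpos : 0 ≤ Real.sin δ := Real.sin_nonneg_of_nonneg_of_le_pi hδ hδpi
  have hsin : Real.sin δ ≤ δ := Real.sin_le hδ
  have hcosd : Real.cos δ = 1 - 2 * Real.sin (δ / 2) ^ 2 := by
    have h2 := Real.cos_two_mul (δ / 2)
    rw [show 2 * (δ / 2) = δ by ring] at h2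
    rw [h2, Real.cos_sq']; ring
  have hcosb : 1 - Real.cos δ ≤ δ ^ 2 / 2 := by
    have h1 : Real.sin (δ / 2) ^ 2 ≤ (δ / 2) ^ 2 := Real.sin_sq_le_sq
    nlinarith
  have hcosone : Real.cos δ ≤ 1 := Real.cos_le_one δ
  have hcosadd : Real.cos (Real.arcsin u + δ)
      = Real.sqrt (1 - u ^ 2) * Real.cos δ - u * Real.sin δ := by
    rw [Real.cos_add, Real.cos_arcsin, Real.sin_arcsin (by linarith) hu1.le]
  have key : Real.sqrt (1 - u ^ 2) - Real.sqrt 2 * δ ≤ Real.cos (Real.arcsin u + δ) := by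
    rw [hcosadd]
    have h3 : Real.sqrt (1 - u ^ 2) * (1 - Real.cos δ) ≤ δ ^ 2 / 2 := by
      nlinarith
    have h4 : u * Real.sin δ ≤ δ := by nlinarith
    have hs43 : (4:ℝ)/3 ≤ Real.sqrt 2 := by nlinarith
    have h5 : δ ^ 2 / 2 + δ ≤ Real.sqrt 2 * δ := by
      nlinarith [mul_le_mul_of_nonneg_right hδlt.le hδ,
        mul_le_mul_of_nonneg_right hs43 hδ]
    nlinarith
  have hpos : 0 < Real.sqrt (1 - u ^ 2) - Real.sqrt 2 * δ := by linarith
  have hcpos : 0 < Real.cos (Real.arcsin u + δ) := lt_of_lt_of_le hpos key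
  exact ⟨hcpos, one_div_le_one_div_of_le hpos key⟩
end

section
/- Let a > 0 and c > 0 be real numbers. Then for every real x ≥ a, (√(x² − a²) + c)/x ≤ √(1 + c²/a²); moreover equality holds at x = √(a² + a⁴/c²), so the maximum of (√(x² − a²) + c)/x over x ∈ [a, ∞) equals √(1 + c²/a²). -/
open Real

lemma stmt_13_key (a c : ℝ) (ha : 0 < a) (hc : 0 < c) :
    ∀ x : ℝ, a ≤ x →
      (Real.sqrt (x ^ 2 - a ^ 2) + c) / x ≤ Real.sqrt (1 + c ^ 2 / a ^ 2) := by
  intro x hx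
  have hx0 : 0 < x := lt_of_lt_of_le ha hx
  have hx2 : a ^ 2 ≤ x ^ 2 := by nlinarith
  set s := Real.sqrt (x ^ 2 - a ^ 2) with hs
  have hsnn : 0 ≤ s := Real.sqrt_nonneg _
  have hssq : s ^ 2 = x ^ 2 - a ^ 2 := Real.sq_sqrt (by linarith)
  set t := Real.sqrt (1 + c ^ 2 / a ^ 2) with ht
  have htnn : 0 ≤ t := Real.sqrt_nonneg _
  have htsq : t ^ 2 = 1 + c ^ 2 / a ^ 2 :=
    Real.sq_sqrt (by positivity)
  have htpos : 0 < t := Real.sqrt_pos.mpr (by positivity)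
  have htsq2 : a ^ 2 * t ^ 2 = a ^ 2 + c ^ 2 := by
    rw [htsq]; field_simp
  rw [div_le_iff₀ hx0]
  have h1 : a ^ 2 * (s + c) ^ 2 ≤ (a ^ 2 + c ^ 2) * x ^ 2 := by
    nlinarith [sq_nonneg (s * c - a ^ 2)]
  have h2 : (s + c) ^ 2 ≤ (t * x) ^ 2 := by
    nlinarith [mul_pos ha ha]
  nlinarith [h2, mul_nonneg htpos.le hx0.le]

theorem stmt_13 (a c : ℝ) (ha : 0 < a) (hc : 0 < c) :
    (∀ x : ℝ, a ≤ x →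
        (Real.sqrt (x ^ 2 - a ^ 2) + c) / x ≤ Real.sqrt (1 + c ^ 2 / a ^ 2)) ∧
      (Real.sqrt (Real.sqrt (a ^ 2 + a ^ 4 / c ^ 2) ^ 2 - a ^ 2) + c) /
          Real.sqrt (a ^ 2 + a ^ 4 / c ^ 2) = Real.sqrt (1 + c ^ 2 / a ^ 2) ∧
      IsGreatest ((fun x : ℝ => (Real.sqrt (x ^ 2 - a ^ 2) + c) / x) '' Set.Ici a)
        (Real.sqrt (1 + c ^ 2 / a ^ 2)) := by
  have key := stmt_13_key a c ha hc
  have harg : (0:ℝ) ≤ a ^ 2 + a ^ 4 / c ^ 2 := by positivity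
  set x₀ := Real.sqrt (a ^ 2 + a ^ 4 / c ^ 2) with hx₀
  have hx₀sq : x₀ ^ 2 = a ^ 2 + a ^ 4 / c ^ 2 := Real.sq_sqrt harg
  have hx₀a : a ≤ x₀ := by
    rw [hx₀]
    calc a = Real.sqrt (a ^ 2) := (Real.sqrt_sq ha.le).symm
    _ ≤ _ := Real.sqrt_le_sqrt (le_add_of_nonneg_right (by positivity))
  have hx₀pos : 0 < x₀ := lt_of_lt_of_le ha hx₀a
  have hinner : Real.sqrt (x₀ ^ 2 - a ^ 2) = a ^ 2 / c := by
    rw [hx₀sq]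
    have : a ^ 2 + a ^ 4 / c ^ 2 - a ^ 2 = (a ^ 2 / c) ^ 2 := by field_simp; ring
    rw [this, Real.sqrt_sq (by positivity)]
  have hprodval : (1 + c ^ 2 / a ^ 2) * (a ^ 2 + a ^ 4 / c ^ 2) = (a ^ 2 / c + c) ^ 2 := by
    field_simp; ring
  have hprod : Real.sqrt (1 + c ^ 2 / a ^ 2) * x₀ = a ^ 2 / c + c := by
    rw [hx₀, ← Real.sqrt_mul (by positivity), hprodval, Real.sqrt_sq (by positivity)]
  have heq : (Real.sqrt (x₀ ^ 2 - a ^ 2) + c) / x₀ = Real.sqrt (1 + c ^ 2 / a ^ 2) := by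
    rw [hinner, div_eq_iff hx₀pos.ne', hprod]
  refine ⟨key, heq, ⟨⟨x₀, hx₀a, heq⟩, ?_⟩⟩
  rintro y ⟨x, hx, rfl⟩
  exact key x hx
end

section
/- Let α ≥ 1 and let β be a real number with 0 < β < 1/(1+α). Then for every real x with 1−β ≤ x ≤ α(1+β): ( √(x² − (1−β)²) + α(1−β²)/√((1−β)² − α²β²) + √(α²(1+β)² − (1−β)²) ) / x ≤ √( 1 + ( √(α²(1+β)²/(1−β)² − 1) + α(1+β)/√((1−β)² − α²β²) )² ). -/
open Real

theorem stmt_14 (α β : ℝ) (hα : 1 ≤ α) (hβ0 : 0 < β) (hβ1 : β < 1 / (1 + α))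
    (x : ℝ) (hx1 : 1 - β ≤ x) (hx2 : x ≤ α * (1 + β)) :
    (Real.sqrt (x ^ 2 - (1 - β) ^ 2) +
        α * (1 - β ^ 2) / Real.sqrt ((1 - β) ^ 2 - α ^ 2 * β ^ 2) +
        Real.sqrt (α ^ 2 * (1 + β) ^ 2 - (1 - β) ^ 2)) / x ≤
      Real.sqrt (1 +
        (Real.sqrt (α ^ 2 * (1 + β) ^ 2 / (1 - β) ^ 2 - 1) +
          α * (1 + β) / Real.sqrt ((1 - β) ^ 2 - α ^ 2 * β ^ 2)) ^ 2) := by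
  have hα0 : (0:ℝ) < α := by linarith
  have h1α : (0:ℝ) < 1 + α := by linarith
  have hβα : β * (1 + α) < 1 := (lt_div_iff₀ h1α).mp hβ1
  set a := 1 - β with ha
  set b := α * (1 + β) with hb
  have ha0 : 0 < a := by nlinarith
  have hx0 : 0 < x := lt_of_lt_of_le ha0 hx1
  have hab : a ≤ b := by nlinarith
  have hαβa : α * β < a := by nlinarith
  have ha2 : 0 < a ^ 2 - α ^ 2 * β ^ 2 := by nlinarith [mul_pos hα0 hβ0]
  set D := Real.sqrt (a ^ 2 - α ^ 2 * β ^ 2) with hD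
  have hD0 : 0 < D := Real.sqrt_pos.mpr ha2
  set s := Real.sqrt (x ^ 2 - a ^ 2) with hsdef
  have hs2 : s ^ 2 = x ^ 2 - a ^ 2 := Real.sq_sqrt (by nlinarith)
  have hs0 : 0 ≤ s := Real.sqrt_nonneg _
  set t := Real.sqrt (b ^ 2 - a ^ 2) with htdef
  have ht2 : t ^ 2 = b ^ 2 - a ^ 2 := Real.sq_sqrt (by nlinarith)
  have ht0 : 0 ≤ t := Real.sqrt_nonneg _
  set k := t / a + b / D with hk
  have hk0 : 0 ≤ k := by positivity
  set r := Real.sqrt (1 + k ^ 2) with hr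
  have hr2 : r ^ 2 = 1 + k ^ 2 := Real.sq_sqrt (by positivity)
  have hr0 : 0 ≤ r := Real.sqrt_nonneg _
  -- rewrite the goal
  have e1 : α * (1 - β ^ 2) = a * b := by rw [ha, hb]; ring
  have e2 : α ^ 2 * (1 + β) ^ 2 = b ^ 2 := by rw [hb]; ring
  rw [e1, e2]
  have e3 : Real.sqrt (b ^ 2 / a ^ 2 - 1) = t / a := by
    rw [htdef, show b ^ 2 / a ^ 2 - 1 = (b ^ 2 - a ^ 2) / a ^ 2 by field_simp,
      Real.sqrt_div (by nlinarith), Real.sqrt_sq ha0.le]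
  rw [e3, ← htdef, ← hk, ← hr]
  rw [div_le_iff₀ hx0]
  have hak : a * b / D + t = a * k := by
    rw [hk]; field_simp; ring
  rw [add_assoc, hak]
  have key : (x * r) ^ 2 = (s + a * k) ^ 2 + (s * k - a) ^ 2 := by
    linear_combination x ^ 2 * hr2 - (1 + k ^ 2) * hs2
  have hsq : (s + a * k) ^ 2 ≤ (x * r) ^ 2 := by linarith [key, sq_nonneg (s * k - a)]
  have h1 : 0 ≤ s + a * k := by positivity
  have h2 : 0 ≤ x * r := by positivity
  linarith [mul_comm x r, (pow_le_pow_iff_left₀ h1 h2 two_ne_zero).mp hsq, mul_comm x r]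
end

section
/- Let α > 1 and let μ, γ, d₀, σ, r, T₀ be positive reals with γ < 4μ. Then the series Σ_{i=0}^{∞} exp( − d₀²·α^{2μ·i} / (σ·r·√(2π·T₀·α^{γ·i})) ) converges. -/
/-! Since `√(α ^ (γ i)) = α ^ (γ i / 2)`, the `i`-th term is `exp (-(C * b ^ i))` with
`C = d₀² / (σ r √(2π T₀))` and `b = α ^ (2μ - γ/2)`, and `b > 1` exactly because `γ < 4μ`.
By Bernoulli's inequality `b ^ i ≥ (b - 1) i`, so the terms are dominated by a geometric series. -/

open Real

lemma Real.summable_exp_neg_mul_pow {C b : ℝ} (hC : 0 < C) (hb : 1 < b) :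
    Summable fun n : ℕ => exp (-(C * b ^ n)) := by
  have hb₁ : 0 < b - 1 := sub_pos.2 hb
  refine (summable_exp_nat_mul_of_ge (neg_neg_of_pos (mul_pos hC hb₁))
    (Nat.cast_le_pow_div_sub hb)).congr fun n => ?_
  congr 1
  field_simp

lemma Real.sqrt_mul_rpow {a x : ℝ} (ha : 0 ≤ a) (hx : 0 ≤ x) (y : ℝ) :
    √(a * x ^ y) = √a * x ^ (y / 2) := by
  rw [sqrt_mul ha, sqrt_eq_rpow (x ^ y), ← rpow_mul hx, mul_one_div]

theorem stmt_16_general (α μ γ d₀ σ r T₀ : ℝ) (hα : 1 < α)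
    (hd₀ : 0 < d₀) (hσ : 0 < σ) (hr : 0 < r) (hT₀ : 0 < T₀) (hγμ : γ < 4 * μ) :
    Summable (fun i : ℕ =>
      Real.exp (-(d₀ ^ 2 * α ^ (2 * μ * i)) /
        (σ * r * Real.sqrt (2 * π * (T₀ * α ^ (γ * i)))))) := by
  have hα₀ : 0 < α := zero_lt_one.trans hα
  have hsqrt : 0 < √(2 * π * T₀) := sqrt_pos.2 (by positivity)
  refine (summable_exp_neg_mul_pow (C := d₀ ^ 2 / (σ * r * √(2 * π * T₀)))
    (by positivity) (one_lt_rpow hα (by linarith : 0 < 2 * μ - γ / 2))).congr fun i => ?_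
  have hsplit : α ^ (2 * μ * i) = (α ^ (2 * μ - γ / 2)) ^ i * α ^ (γ * i / 2) := by
    rw [← rpow_natCast, ← rpow_mul hα₀.le, ← rpow_add hα₀]
    ring_nf
  rw [← mul_assoc, sqrt_mul_rpow (by positivity) hα₀.le, hsplit]
  have hpow : 0 < α ^ (γ * i / 2) := rpow_pos_of_pos hα₀ _
  field_simp

theorem stmt_16 (α μ γ d₀ σ r T₀ : ℝ) (hα : 1 < α) (hμ : 0 < μ) (hγ : 0 < γ)
    (hd₀ : 0 < d₀) (hσ : 0 < σ) (hr : 0 < r) (hT₀ : 0 < T₀) (hγμ : γ < 4 * μ) :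
    Summable (fun i : ℕ =>
      Real.exp (-(d₀ ^ 2 * α ^ (2 * μ * i)) /
        (σ * r * Real.sqrt (2 * π * (T₀ * α ^ (γ * i)))))) :=
  stmt_16_general α μ γ d₀ σ r T₀ hα hd₀ hσ hr hT₀ hγμ
end
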